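/- arXiv:2410.05328 — 6 statements merged into one kernel-verified Lean document; each statement's English description precedes it below -/
import Mathlib

section
/- Let θ ≥ 1 and let d, d̂ be real numbers with σ(d̂) = q_θ(d), where σ(x) = 1/(1 + exp(−x)) and q_θ(d) = p_θ(d) + t_θ(d)/2. Then the signed BT win-probability difference matches the signed BTT win-probability difference: σ(d̂) − σ(−d̂) = p_θ(d) − p_θ(−d). -/
open Real

noncomputable def pBTT (θ d : ℝ) : ℝ := 1 / (1 + θ * Real.exp (-d))

noncomputable def tBTT (θ d : ℝ) : ℝ :=
  (θ ^ 2 - 1) * Real.exp d / ((Real.exp d + θ) * (θ * Real.exp d + 1))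

noncomputable def qBTT (θ d : ℝ) : ℝ := pBTT θ d + tBTT θ d / 2

noncomputable def logistic (x : ℝ) : ℝ := 1 / (1 + Real.exp (-x))

theorem logistic_eq_sigmoid : logistic = Real.sigmoid := by
  ext x
  rw [logistic, Real.sigmoid_def, one_div]

theorem pBTT_add_tBTT_add_pBTT_neg {θ : ℝ} (hθ : 0 ≤ θ) (d : ℝ) :
    pBTT θ d + tBTT θ d + pBTT θ (-d) = 1 := by
  unfold pBTT tBTT
  rw [neg_neg, Real.exp_neg]
  field_simp
  ring

-- Win, tie and loss probabilities sum to one, so `2 q - 1 = 2 p + t - (p + t + p') = p - p'`.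
theorem signed_win_prob_diff_match (θ d dhat : ℝ) (hθ : 1 ≤ θ)
    (h : logistic dhat = qBTT θ d) :
    logistic dhat - logistic (-dhat) = pBTT θ d - pBTT θ (-d) := by
  have hneg : logistic (-dhat) = 1 - logistic dhat := by
    simp only [logistic_eq_sigmoid, Real.sigmoid_neg]
  have hsum := pBTT_add_tBTT_add_pBTT_neg (zero_le_one.trans hθ) d
  rw [hneg, h, qBTT]
  linarith
end

section
/- (Theorem 2, logarithmic form) Let θ ≥ 1 and let d, d̂ be real numbers satisfying σ(d̂) = q_θ(d), where σ(x) = 1/(1 + exp(−x)) and q_θ(d) = p_θ(d) + t_θ(d)/2. Then d̂ = d + log( (2θ + (1 + θ²)·exp(−d)) / (1 + θ² + 2θ·exp(−d)) ). -/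
open Real

theorem bias_logarithmic_form (θ d dhat : ℝ) (hθ : 1 ≤ θ)
    (h : logistic dhat = qBTT θ d) :
    dhat = d + Real.log ((2 * θ + (1 + θ ^ 2) * Real.exp (-d)) /
      (1 + θ ^ 2 + 2 * θ * Real.exp (-d))) := by
  have hθ0 : (0:ℝ) < θ := lt_of_lt_of_le one_pos hθ
  have hE : (0:ℝ) < Real.exp d := Real.exp_pos d
  have hEn : Real.exp (-d) = 1 / Real.exp d := by
    rw [Real.exp_neg]; exact (inv_eq_one_div _)
  have hX : Real.exp (-dhat) = 1 / Real.exp dhat := by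
    rw [Real.exp_neg]; exact (inv_eq_one_div _)
  set E := Real.exp d with hEdef
  have hN : (0:ℝ) < 2 * θ * E + 1 + θ ^ 2 := by positivity
  have hD : (0:ℝ) < (1 + θ ^ 2) * E + 2 * θ := by positivity
  have h1 : (0:ℝ) < E + θ := by positivity
  have h2 : (0:ℝ) < θ * E + 1 := by positivity
  have hXd : (0:ℝ) < Real.exp dhat := Real.exp_pos dhat
  have key : Real.exp dhat * ((1 + θ ^ 2) * E + 2 * θ) = E * (2 * θ * E + 1 + θ ^ 2) := by
    unfold logistic qBTT pBTT tBTT at h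
    rw [hEn, hX] at h
    field_simp at h
    nlinarith [h, sq_nonneg θ, sq_nonneg E]
  have hexp : Real.exp dhat = E * ((2 * θ * E + 1 + θ ^ 2) / ((1 + θ ^ 2) * E + 2 * θ)) := by
    rw [← mul_div_assoc, eq_div_iff (ne_of_gt hD)]
    linarith [key]
  have hfrac : (2 * θ + (1 + θ ^ 2) * Real.exp (-d)) /
      (1 + θ ^ 2 + 2 * θ * Real.exp (-d)) =
      (2 * θ * E + 1 + θ ^ 2) / ((1 + θ ^ 2) * E + 2 * θ) := by
    rw [hEn, div_eq_div_iff (by positivity) (by positivity)]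
    field_simp
    ring
  rw [hfrac]
  have : dhat = Real.log (Real.exp dhat) := (Real.log_exp dhat).symm
  rw [this, hexp, Real.log_mul (ne_of_gt hE) (by positivity), Real.log_exp]
end

section
/- (Boundedness of the preference-strength bias) Let θ ≥ 1 and let d, d̂ be real numbers satisfying σ(d̂) = q_θ(d), where σ(x) = 1/(1 + exp(−x)) and q_θ(d) = p_θ(d) + t_θ(d)/2. Then |d̂ − d| ≤ log((1 + θ²)/(2θ)). -/
open Real

theorem bias_bounded (θ d dhat : ℝ) (hθ : 1 ≤ θ)
    (h : logistic dhat = qBTT θ d) :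
    |dhat - d| ≤ Real.log ((1 + θ ^ 2) / (2 * θ)) := by
  have hθ0 : (0:ℝ) < θ := lt_of_lt_of_le one_pos hθ
  have hE : 0 < Real.exp d := Real.exp_pos d
  have hEh : 0 < Real.exp dhat := Real.exp_pos dhat
  set e := Real.exp d with he
  set f := Real.exp dhat with hf
  have h1 : 0 < e + θ := by positivity
  have h2 : 0 < θ * e + 1 := by positivity
  have h3 : 0 < 1 + θ * Real.exp (-d) := by positivity
  have h4 : 0 < 1 + Real.exp (-dhat) := by positivity
  have hmd : Real.exp (-d) = 1 / e := by rw [Real.exp_neg]; field_simp; exact he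
  have hmdh : Real.exp (-dhat) = 1 / f := by rw [Real.exp_neg]; field_simp; exact hf
  -- key algebraic identity
  have key : f * ((1 + θ ^ 2) * e + 2 * θ) = e * (2 * θ * e + θ ^ 2 + 1) := by
    have h' := h
    unfold logistic qBTT pBTT tBTT at h'
    rw [hmd, hmdh] at h'
    have hD : 0 < (1 + θ ^ 2) * e + 2 * θ := by positivity
    field_simp at h'
    nlinarith [h', hE, hEh, h1, h2]
  have hD : 0 < (1 + θ ^ 2) * e + 2 * θ := by positivity
  have hN : 0 < 2 * θ * e + θ ^ 2 + 1 := by positivity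
  have hratio : Real.exp (dhat - d) =
      (2 * θ * e + θ ^ 2 + 1) / ((1 + θ ^ 2) * e + 2 * θ) := by
    rw [Real.exp_sub, ← he, ← hf]
    rw [div_eq_div_iff (by positivity) hD.ne']
    linarith [key]
  have hc : 0 < (1 + θ ^ 2) / (2 * θ) := by positivity
  rw [abs_le]
  constructor
  · have h5 : (2 * θ) / (1 + θ ^ 2) ≤ Real.exp (dhat - d) := by
      rw [hratio, div_le_div_iff₀ (by positivity) hD]
      nlinarith [sq_nonneg (θ^2 - 1), hE]
    have : Real.log ((2 * θ) / (1 + θ ^ 2)) ≤ dhat - d := by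
      rw [Real.log_le_iff_le_exp (by positivity)]
      exact h5
    have hinv : Real.log ((2 * θ) / (1 + θ ^ 2)) = - Real.log ((1 + θ ^ 2) / (2 * θ)) := by
      rw [← Real.log_inv]; congr 1; field_simp
    linarith [hinv ▸ this]
  · have h5 : Real.exp (dhat - d) ≤ (1 + θ ^ 2) / (2 * θ) := by
      rw [hratio, div_le_div_iff₀ hD (by positivity)]
      nlinarith [sq_nonneg (θ^2 - 1), hE]
    rw [Real.le_log_iff_exp_le hc]
    exact h5
end

section
/- (Sign of the bias term) Let θ > 1 and define the bias b(d) = log( (2θ + (1 + θ²)·exp(−d)) / (1 + θ² + 2θ·exp(−d)) ) for d ∈ ℝ. Then the sign of b(d) is opposite to the sign of d: b(d) < 0 when d > 0, b(d) > 0 when d < 0, and b(0) = 0. In particular, any d̂ with σ(d̂) = q_θ(d) satisfies |d̂| ≤ |d| with d̂ between 0 and d. -/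
open Real

noncomputable def biasTerm (θ d : ℝ) : ℝ :=
  Real.log ((2 * θ + (1 + θ ^ 2) * Real.exp (-d)) / (1 + θ ^ 2 + 2 * θ * Real.exp (-d)))

lemma logistic_injective : Function.Injective logistic := by
  intro x y h
  unfold logistic at h
  have hx : (0:ℝ) < 1 + Real.exp (-x) := by positivity
  have hy : (0:ℝ) < 1 + Real.exp (-y) := by positivity
  field_simp at h
  have h' : Real.exp (-x) = Real.exp (-y) := by linarith
  have := Real.exp_injective h'
  linarith

lemma logistic_shift (θ : ℝ) (hθ : 1 < θ) (d : ℝ) :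
    logistic (d + biasTerm θ d) = qBTT θ d := by
  have hu : 0 < Real.exp (-d) := Real.exp_pos _
  have hθ0 : 0 < θ := by linarith
  have hN : 0 < 2*θ + (1+θ^2)*Real.exp (-d) := by positivity
  have hD : 0 < 1+θ^2 + 2*θ*Real.exp (-d) := by positivity
  have hexpb : Real.exp (biasTerm θ d)
      = (2*θ + (1+θ^2)*Real.exp (-d)) / (1+θ^2+2*θ*Real.exp (-d)) := by
    rw [biasTerm, Real.exp_log (by positivity)]
  unfold logistic qBTT pBTT tBTT
  rw [neg_add, Real.exp_add, Real.exp_neg (biasTerm θ d), hexpb]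
  have hv : Real.exp d = (Real.exp (-d))⁻¹ := by rw [← Real.exp_neg, neg_neg]
  rw [hv]
  have h1 : (0:ℝ) < 1 + θ*Real.exp (-d) := by positivity
  have h2 : 0 < (Real.exp (-d))⁻¹ + θ := by positivity
  have h3 : 0 < θ*(Real.exp (-d))⁻¹ + 1 := by positivity
  field_simp
  ring

theorem bias_sign_opposite (θ : ℝ) (hθ : 1 < θ) :
    (∀ d : ℝ, 0 < d → biasTerm θ d < 0) ∧
    (∀ d : ℝ, d < 0 → 0 < biasTerm θ d) ∧
    biasTerm θ 0 = 0 ∧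
    (∀ d dhat : ℝ, logistic dhat = qBTT θ d →
      |dhat| ≤ |d| ∧ dhat ∈ Set.uIcc 0 d) := by
  have hθ0 : 0 < θ := by linarith
  have hN : ∀ d : ℝ, 0 < 2*θ + (1+θ^2)*Real.exp (-d) := fun d => by positivity
  have hD : ∀ d : ℝ, 0 < 1+θ^2 + 2*θ*Real.exp (-d) := fun d => by positivity
  have hneg : ∀ d : ℝ, 0 < d → biasTerm θ d < 0 := by
    intro d hd
    apply Real.log_neg (by positivity)
    rw [div_lt_one (hD d)]
    have hu : Real.exp (-d) < 1 := Real.exp_lt_one_iff.mpr (by linarith)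
    have hsq : 0 < (θ - 1)^2 := pow_pos (by linarith) 2
    nlinarith [mul_pos hsq (show 0 < 1 - Real.exp (-d) by linarith)]
  have hpos : ∀ d : ℝ, d < 0 → 0 < biasTerm θ d := by
    intro d hd
    apply Real.log_pos
    rw [lt_div_iff₀ (hD d)]
    have hu : 1 < Real.exp (-d) := by
      rw [← Real.exp_zero]; exact Real.exp_lt_exp.mpr (by linarith)
    have hsq : 0 < (θ - 1)^2 := pow_pos (by linarith) 2
    nlinarith [mul_pos hsq (show 0 < Real.exp (-d) - 1 by linarith)]
  have hzero : biasTerm θ 0 = 0 := by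
    unfold biasTerm
    rw [neg_zero, Real.exp_zero]
    rw [show 2*θ + (1+θ^2)*1 = 1+θ^2+2*θ*1 by ring, div_self (by nlinarith), Real.log_one]
  refine ⟨hneg, hpos, hzero, ?_⟩
  intro d dhat hq
  have hd : dhat = d + biasTerm θ d :=
    logistic_injective (hq.trans (logistic_shift θ hθ d).symm)
  -- bound: for d ≥ 0, -d ≤ biasTerm; for d ≤ 0, biasTerm ≤ -d
  have hub : ∀ d : ℝ, 0 ≤ d → -d ≤ biasTerm θ d := by
    intro d hd0
    have hu1 : Real.exp (-d) ≤ 1 := Real.exp_le_one_iff.mpr (by linarith)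
    have hu : 0 < Real.exp (-d) := Real.exp_pos _
    have : Real.exp (-d) ≤ (2*θ + (1+θ^2)*Real.exp (-d)) / (1+θ^2+2*θ*Real.exp (-d)) := by
      rw [le_div_iff₀ (hD d)]
      have hu2 : Real.exp (-d) * Real.exp (-d) ≤ 1 := by nlinarith
      nlinarith [mul_nonneg hθ0.le (sub_nonneg.mpr hu2)]
    calc -d = Real.log (Real.exp (-d)) := (Real.log_exp _).symm
      _ ≤ _ := Real.log_le_log hu this
  have hlb : ∀ d : ℝ, d ≤ 0 → biasTerm θ d ≤ -d := by
    intro d hd0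
    have hu1 : 1 ≤ Real.exp (-d) := by
      rw [← Real.exp_zero]; exact Real.exp_le_exp.mpr (by linarith)
    have : (2*θ + (1+θ^2)*Real.exp (-d)) / (1+θ^2+2*θ*Real.exp (-d)) ≤ Real.exp (-d) := by
      rw [div_le_iff₀ (hD d)]
      have hu2 : 1 ≤ Real.exp (-d) * Real.exp (-d) := by nlinarith
      nlinarith [mul_nonneg hθ0.le (sub_nonneg.mpr hu2)]
    calc biasTerm θ d ≤ Real.log (Real.exp (-d)) := Real.log_le_log (by positivity) this
      _ = -d := Real.log_exp _
  rcases le_or_gt 0 d with h0 | h0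
  · have hb2 : -d ≤ biasTerm θ d := hub d h0
    have hb1 : biasTerm θ d ≤ 0 := by
      rcases eq_or_lt_of_le h0 with h | h
      · rw [← h, hzero]
      · exact le_of_lt (hneg d h)
    constructor
    · rw [abs_of_nonneg h0, abs_of_nonneg (by linarith [hd] : (0:ℝ) ≤ dhat)]
      linarith [hd.ge, hd.le]
    · rw [Set.uIcc_of_le h0]
      exact ⟨by linarith [hd.le], by linarith [hd.le]⟩
  · have hb2 : biasTerm θ d ≤ -d := hlb d h0.le
    have hb1 : 0 ≤ biasTerm θ d := le_of_lt (hpos d h0)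
    constructor
    · rw [abs_of_nonpos h0.le, abs_of_nonpos (by linarith [hd.le] : dhat ≤ 0)]
      linarith [hd.le]
    · rw [Set.uIcc_of_ge h0.le]
      exact ⟨by linarith [hd.le], by linarith [hd.le]⟩
end

section
/- (Invertibility of the bias map, used in Algorithm 1) Let θ ≥ 1 and define g(d) = d + log( (2θ + (1 + θ²)·exp(−d)) / (1 + θ² + 2θ·exp(−d)) ) for d ∈ ℝ. Then g is strictly increasing on ℝ and is a bijection from ℝ onto ℝ; consequently for every real d̂ the nonlinear equation g(d) = d̂ has a unique real solution d. -/
/-! Writing `a = 1 + θ²` and `b = 2θ`, multiplying the numerator of the fraction by `exp d` turns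
`g` into `g(d) = log (a + b eᵈ) - log (a + b e⁻ᵈ)`: an increasing function minus a decreasing one,
hence strictly increasing. It is continuous and odd, and `g(d) ≥ d + log b - log (a + b)` for
`d ≥ 0`, so it tends to `±∞` at `±∞` and is onto `ℝ`. -/

open Real

open Filter

noncomputable def biasMap (a b d : ℝ) : ℝ := log (a + b * exp d) - log (a + b * exp (-d))

section

variable {a b : ℝ}

theorem add_log_div_eq_biasMap (ha : 0 ≤ a) (hb : 0 < b) (d : ℝ) :
    d + log ((b + a * exp (-d)) / (a + b * exp (-d))) = biasMap a b d := by
  have hnum : exp d * (b + a * exp (-d)) = a + b * exp d := by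
    rw [mul_add, mul_left_comm, ← exp_add, add_neg_cancel, exp_zero]
    ring
  rw [biasMap, log_div (by positivity) (by positivity), ← hnum,
    log_mul (exp_pos d).ne' (by positivity), log_exp]
  ring

theorem biasMap_neg (a b d : ℝ) : biasMap a b (-d) = -biasMap a b d := by
  rw [biasMap, biasMap, neg_neg, neg_sub]

theorem strictMono_biasMap (ha : 0 ≤ a) (hb : 0 < b) : StrictMono (biasMap a b) := by
  have hlog : StrictMono fun x => log (a + b * exp x) := fun x y hxy =>
    log_lt_log (by positivity) (by gcongr)
  exact fun x y hxy => sub_lt_sub (hlog hxy) (hlog (neg_lt_neg hxy))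

theorem continuous_biasMap (ha : 0 ≤ a) (hb : 0 < b) : Continuous (biasMap a b) := by
  unfold biasMap
  fun_prop (disch := exact fun x => by positivity)

theorem le_biasMap (ha : 0 ≤ a) (hb : 0 < b) {d : ℝ} (hd : 0 ≤ d) :
    d + log b - log (a + b) ≤ biasMap a b d := by
  have hgrow : d + log b ≤ log (a + b * exp d) := by
    rw [add_comm, ← log_exp d, ← log_mul hb.ne' (exp_pos d).ne', log_exp]
    exact log_le_log (by positivity) (by linarith)
  have hdecay : log (a + b * exp (-d)) ≤ log (a + b) :=
    log_le_log (by positivity) (by nlinarith [exp_le_one_iff.mpr (neg_nonpos.mpr hd)])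
  rw [biasMap]
  linarith

theorem tendsto_biasMap_atTop (ha : 0 ≤ a) (hb : 0 < b) :
    Tendsto (biasMap a b) atTop atTop :=
  tendsto_atTop_mono' atTop ((eventually_ge_atTop 0).mono fun _ hd => le_biasMap ha hb hd)
    (tendsto_atTop_add_const_right _ _ (tendsto_atTop_add_const_right _ _ tendsto_id))

theorem tendsto_biasMap_atBot (ha : 0 ≤ a) (hb : 0 < b) :
    Tendsto (biasMap a b) atBot atBot := by
  have hodd : biasMap a b = fun d => -biasMap a b (-d) := by
    funext d
    rw [biasMap_neg, neg_neg]
  rw [hodd]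
  exact tendsto_neg_atTop_atBot.comp ((tendsto_biasMap_atTop ha hb).comp tendsto_neg_atBot_atTop)

theorem surjective_biasMap (ha : 0 ≤ a) (hb : 0 < b) : Function.Surjective (biasMap a b) :=
  (continuous_biasMap ha hb).surjective (tendsto_biasMap_atTop ha hb) (tendsto_biasMap_atBot ha hb)

end

theorem bias_map_invertible (θ : ℝ) (hθ : 1 ≤ θ) :
    StrictMono (fun d : ℝ => d + Real.log ((2 * θ + (1 + θ ^ 2) * Real.exp (-d)) /
        (1 + θ ^ 2 + 2 * θ * Real.exp (-d)))) ∧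
    Function.Bijective (fun d : ℝ => d + Real.log ((2 * θ + (1 + θ ^ 2) * Real.exp (-d)) /
        (1 + θ ^ 2 + 2 * θ * Real.exp (-d)))) ∧
    (∀ dhat : ℝ, ∃! d : ℝ,
      d + Real.log ((2 * θ + (1 + θ ^ 2) * Real.exp (-d)) /
        (1 + θ ^ 2 + 2 * θ * Real.exp (-d))) = dhat) := by
  have ha : 0 ≤ 1 + θ ^ 2 := by positivity
  have hb : 0 < 2 * θ := by linarith
  simp only [add_log_div_eq_biasMap ha hb]
  have hbij : Function.Bijective (biasMap (1 + θ ^ 2) (2 * θ)) :=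
    ⟨(strictMono_biasMap ha hb).injective, surjective_biasMap ha hb⟩
  exact ⟨strictMono_biasMap ha hb, hbij, hbij.existsUnique⟩
end

section
/- For every θ ≥ 1 the tie-broken win probability q_θ is strictly increasing in the reward difference: for all real d₁ < d₂, q_θ(d₁) < q_θ(d₂), where q_θ(d) = p_θ(d) + t_θ(d)/2 with p_θ(d) = 1/(1 + θ·exp(−d)) and t_θ(d) = (θ² − 1)·exp(d) / ((exp(d) + θ)·(θ·exp(d) + 1)). -/
open Real

/-! The tie probability is what the win probability `pBTT θ d` and the loss probability
`pBTT θ (-d)` leave over, so `qBTT θ d = (1 + pBTT θ d - pBTT θ (-d)) / 2`: the win term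
increases with `d` and the loss term decreases. -/

theorem pBTT_strictMono {θ : ℝ} (hθ : 0 < θ) : StrictMono (pBTT θ) := by
  intro d₁ d₂ h
  have hexp : Real.exp (-d₂) < Real.exp (-d₁) := Real.exp_lt_exp.2 (neg_lt_neg h)
  unfold pBTT
  gcongr

theorem tBTT_eq_one_sub_pBTT_sub_pBTT_neg {θ : ℝ} (hθ : 0 ≤ θ) (d : ℝ) :
    tBTT θ d = 1 - pBTT θ d - pBTT θ (-d) := by
  have hx : 0 < Real.exp d := Real.exp_pos d
  have hsum : 0 < Real.exp d + θ := by positivity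
  have hprod : 0 < θ * Real.exp d + 1 := by positivity
  unfold tBTT pBTT
  rw [neg_neg, Real.exp_neg]
  field_simp
  ring

theorem qBTT_eq_pBTT_sub_pBTT_neg {θ : ℝ} (hθ : 0 ≤ θ) (d : ℝ) :
    qBTT θ d = (1 + pBTT θ d - pBTT θ (-d)) / 2 := by
  rw [qBTT, tBTT_eq_one_sub_pBTT_sub_pBTT_neg hθ]
  ring

theorem qBTT_strictMono (θ : ℝ) (hθ : 1 ≤ θ) :
    ∀ d₁ d₂ : ℝ, d₁ < d₂ → qBTT θ d₁ < qBTT θ d₂ := by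
  intro d₁ d₂ h
  have hθ₀ : 0 < θ := zero_lt_one.trans_le hθ
  have hwin : pBTT θ d₁ < pBTT θ d₂ := pBTT_strictMono hθ₀ h
  have hloss : pBTT θ (-d₂) < pBTT θ (-d₁) := pBTT_strictMono hθ₀ (neg_lt_neg h)
  rw [qBTT_eq_pBTT_sub_pBTT_neg hθ₀.le, qBTT_eq_pBTT_sub_pBTT_neg hθ₀.le]
  linarith
end
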